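/- For positive integers n, k with k < n and d = gcd(k+1, n), the quotient binom(n,k)_q / [d]_q is a polynomial in q with integer coefficients. -/
import Mathlib


open Polynomial

/-- The q-integer `[d]_q = 1 + q + ⋯ + q^{d-1}` as a polynomial in `ℤ[q]`. -/
noncomputable def qInt (d : ℕ) : Polynomial ℤ := ∑ i ∈ Finset.range d, X ^ i

/-- The Gaussian (q-)binomial coefficient `binom(n,k)_q` as a polynomial in `ℤ[q]`,
    defined by the q-Pascal recurrence. -/
noncomputable def qBinom : ℕ → ℕ → Polynomial ℤ
  | _, 0 => 1
  | 0, _ + 1 => 0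
  | n + 1, k + 1 => qBinom n k + X ^ (k + 1) * qBinom n (k + 1)

lemma qInt_add (a b : ℕ) : qInt (a + b) = qInt a + X ^ a * qInt b := by
  simp only [qInt, Finset.sum_range_add, Finset.mul_sum, pow_add]

lemma qInt_zero : qInt 0 = 0 := by simp [qInt]

lemma qInt_one : qInt 1 = 1 := by simp [qInt]

lemma qInt_dvd_mul (a t : ℕ) : qInt a ∣ qInt (a * t) := by
  induction t with
  | zero => simp [qInt_zero]
  | succ t ih =>
    rw [Nat.mul_succ, qInt_add]
    exact dvd_add ih (Dvd.dvd.mul_left dvd_rfl _)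

lemma qInt_dvd (a m : ℕ) (h : a ∣ m) : qInt a ∣ qInt m := by
  obtain ⟨t, rfl⟩ := h; exact qInt_dvd_mul a t

lemma qInt_bezout (a b : ℕ) :
    ∃ u v : Polynomial ℤ, qInt (Nat.gcd a b) = u * qInt a + v * qInt b := by
  induction a, b using Nat.gcd.induction with
  | H0 b => exact ⟨0, 1, by simp [Nat.gcd_zero_left]⟩
  | H1 a b ha ih =>
    obtain ⟨u, v, h⟩ := ih
    obtain ⟨c, hc⟩ := qInt_dvd_mul a (b / a)
    have hb : qInt b = qInt (b % a) + X ^ (b % a) * (qInt a * c) := by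
      conv_lhs => rw [← Nat.mod_add_div b a, qInt_add, hc]
    refine ⟨v - u * X ^ (b % a) * c, u, ?_⟩
    rw [Nat.gcd_rec, h]
    rw [hb]; ring

lemma qBinom_zero (n : ℕ) : qBinom n 0 = 1 := by cases n <;> rfl

lemma qBinom_eq_zero : ∀ n k : ℕ, n < k → qBinom n k = 0 := by
  intro n
  induction n with
  | zero => intro k hk; cases k with
    | zero => omega
    | succ k => rfl
  | succ n ih =>
    intro k hk
    cases k with
    | zero => omega
    | succ k =>
      show qBinom n k + X ^ (k + 1) * qBinom n (k + 1) = 0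
      rw [ih k (by omega), ih (k + 1) (by omega)]
      ring

lemma qBinom_identity : ∀ n k : ℕ,
    qInt (k + 1) * qBinom n (k + 1) = qInt (n - k) * qBinom n k := by
  intro n
  induction n with
  | zero =>
    intro k
    cases k with
    | zero => simp [qBinom, qInt_zero]
    | succ k => simp [qBinom, qBinom_eq_zero 0 (k+1) (by omega)]
  | succ n ih =>
    intro k
    cases k with
    | zero =>
      have h0 := ih 0
      rw [Nat.sub_zero, qBinom_zero, mul_one, qInt_one, one_mul] at h0
      have hrec : qBinom (n + 1) (0 + 1) = qBinom n 0 + X ^ (0 + 1) * qBinom n (0 + 1) := rfl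
      rw [Nat.sub_zero, hrec, qBinom_zero, qBinom_zero, qInt_one, one_mul, mul_one,
        zero_add, h0, show n + 1 = 1 + n by omega, qInt_add, qInt_one, pow_one]
    | succ j =>
      by_cases hn : j + 1 ≤ n
      · have h1 := ih j
        have h2 := ih (j + 1)
        have e1 : qInt (n + 1) = qInt (j + 2) + X ^ (j + 2) * qInt (n - (j + 1)) := by
          rw [← qInt_add]; congr 1; omega
        have e2 : qInt (n + 1) = qInt (j + 1) + X ^ (j + 1) * qInt (n - j) := by
          rw [← qInt_add]; congr 1; omega
        show qInt (j + 2) * (qBinom n (j + 1) + X ^ (j + 2) * qBinom n (j + 2)) =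
          qInt (n + 1 - (j + 1)) * (qBinom n j + X ^ (j + 1) * qBinom n (j + 1))
        rw [show n + 1 - (j + 1) = n - j by omega]
        linear_combination (X : Polynomial ℤ) ^ (j + 2) * h2 + h1 +
          qBinom n (j + 1) * e2 - qBinom n (j + 1) * e1
      · show qInt (j + 2) * (qBinom n (j + 1) + X ^ (j + 2) * qBinom n (j + 2)) =
          qInt (n + 1 - (j + 1)) * (qBinom n j + X ^ (j + 1) * qBinom n (j + 1))
        rw [qBinom_eq_zero n (j + 1) (by omega), qBinom_eq_zero n (j + 2) (by omega),
          show n + 1 - (j + 1) = 0 by omega, qInt_zero]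
        ring

/-- For `0 < k < n` and `d = gcd(k+1,n)`, the quotient `binom(n,k)_q / [d]_q`
    is a polynomial with integer coefficients: `[d]_q` divides `binom(n,k)_q` in `ℤ[q]`. -/
theorem qInt_gcd_dvd_qBinom (n k d : ℕ) (hk : 0 < k) (hkn : k < n)
    (hd : d = Nat.gcd (k + 1) n) :
    ∃ f : Polynomial ℤ, qBinom n k = qInt d * f := by
  have hdk : d ∣ k + 1 := hd ▸ Nat.gcd_dvd_left _ _
  have hdn : d ∣ n := hd ▸ Nat.gcd_dvd_right _ _
  -- gcd (d, n-k) = 1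
  obtain ⟨m, hm⟩ : d ∣ n - (k + 1) := (Nat.dvd_sub hdn hdk)
  have hnk : n - k = 1 + d * m := by omega
  have hcop : Nat.gcd d (n - k) = 1 := by
    rw [hnk, Nat.gcd_add_mul_left_right d 1 m, Nat.gcd_one_right]
  obtain ⟨u, v, huv⟩ := qInt_bezout d (n - k)
  rw [hcop, qInt_one] at huv
  obtain ⟨g, hg⟩ := qInt_dvd d (k + 1) hdk
  have hid := qBinom_identity n k
  refine ⟨u * qBinom n k + v * (g * qBinom n (k + 1)), ?_⟩
  calc qBinom n k = (u * qInt d + v * qInt (n - k)) * qBinom n k := by rw [← huv, one_mul]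
    _ = u * qInt d * qBinom n k + v * (qInt (n - k) * qBinom n k) := by ring
    _ = u * qInt d * qBinom n k + v * (qInt (k + 1) * qBinom n (k + 1)) := by rw [hid]
    _ = qInt d * (u * qBinom n k + v * (g * qBinom n (k + 1))) := by rw [hg]; ring
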